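/- Let G be a finite connected graph with n nodes and consider the hyper-clustering procedure HCluster, which repeatedly replaces the current (hyper)graph by the hypergraph whose nodes are the clusters produced by the clustering algorithm Cluster, stopping as soon as the current connected (hyper)graph H satisfies |E(H)| = |N(H)| − 1 (i.e., is acyclic). Then HCluster terminates, and the number of calls it makes to Cluster is at most ⌈n/2⌉. -/

import Mathlib

/-!
Formalisation of the clustering algorithm `Cluster` from
"Optimisation by Pre-Compilation".

A graph is given by a vertex type `V` with a symmetric adjacency
relation `Adj`.  `Deg N n` is the degree of `n` within the node set `N`,
`NDeg N n` the normalised degree.  An execution of the (nondeterministic)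
clustering algorithm is modelled by the inductive predicates
`Propagates` (the propagation phase growing one cluster) and
`ClusterExec` (the driver, producing the list of clusters).
-/

namespace P2P

variable {V : Type*}

/-- The degree of node `n` within the set of nodes `N`:
the number of nodes in `N \ {n}` adjacent to `n`. -/
noncomputable def Deg (Adj : V → V → Prop) (N : Set V) (n : V) : ℕ :=
  {m ∈ N | m ≠ n ∧ Adj m n}.ncard

/-- The normalised degree of node `n` within the set of nodes `N`:
the number of nodes in `N \ {n}` adjacent to `n` whose degree exceeds `1`. -/
noncomputable def NDeg (Adj : V → V → Prop) (N : Set V) (n : V) : ℕ :=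
  {m ∈ N | m ≠ n ∧ Adj m n ∧ 1 < Deg Adj N m}.ncard

/-- The extension set `I` of the propagation phase: the unclustered nodes
(of `U`) adjacent to some node `n'` of the current cluster `C` with
`NDeg (U ∪ C) n' ≤ 2`, together with the unclustered nodes adjacent to some
node `n'` of `C` with `Deg (U ∪ C) n' = 1`. -/
def extSet (Adj : V → V → Prop) (U C : Set V) : Set V :=
  {n ∈ U | ∃ n' ∈ C, Adj n n' ∧
      (NDeg Adj (U ∪ C) n' ≤ 2 ∨ Deg Adj (U ∪ C) n' = 1)}

/-- `Propagates Adj U C C'` : starting from the set `U` of unclustered nodes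
and current cluster `C`, repeatedly adding the extension set (and removing it
from the unclustered nodes) terminates with final cluster `C'`. -/
inductive Propagates (Adj : V → V → Prop) : Set V → Set V → Set V → Prop
  | done (U C : Set V) : extSet Adj U C = ∅ → Propagates Adj U C C
  | step (U C C' : Set V) : extSet Adj U C ≠ ∅ →
      Propagates Adj (U \ extSet Adj U C) (C ∪ extSet Adj U C) C' →
      Propagates Adj U C C'

/-- `ClusterExec Adj U Cs` : one possible execution of the clustering
algorithm on the set `U` of (still unclustered) nodes, producing the list of
clusters `Cs`.  While unclustered nodes remain, a node `n` of minimal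
normalised degree among the unclustered nodes is chosen, the new cluster is
started as `{n}` and grown by propagation; its nodes are removed from the
unclustered set. -/
inductive ClusterExec (Adj : V → V → Prop) : Set V → List (Set V) → Prop
  | nil : ClusterExec Adj ∅ []
  | cons {U : Set V} {n : V} {C : Set V} {rest : List (Set V)} :
      n ∈ U →
      (∀ m ∈ U, NDeg Adj U n ≤ NDeg Adj U m) →
      Propagates Adj (U \ {n}) {n} C →
      ClusterExec Adj (U \ C) rest →
      ClusterExec Adj U (C :: rest)

/-- A graph is connected if any two nodes are joined by a chain of
adjacent nodes. -/
def Conn (Adj : V → V → Prop) : Prop :=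
  ∀ a b : V, Relation.ReflTransGen Adj a b

end P2P

namespace P2P

universe u

/-- A finite simple graph, bundled with its vertex type.  The nodes of the
hypergraphs produced by `HCluster` are clusters, i.e. sets of nodes of the
previous level, so the vertex type changes from level to level. -/
structure FinSG : Type (u + 1) where
  V : Type u
  fin : Fintype V
  G : SimpleGraph V

attribute [instance] FinSG.fin

/-- The stopping condition of `HCluster`: the current connected (hyper)graph
satisfies `|E| = |N| - 1`, i.e. it is acyclic. -/
def Stopped (A : FinSG) : Prop :=
  A.G.edgeSet.ncard = Fintype.card A.V - 1

/-- One step of `HCluster`: the (hyper)graph `B` is (isomorphic to) the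
hypergraph obtained from `A` by one call of the clustering algorithm
`Cluster`; its nodes are the clusters of some execution of `Cluster` on the
node set of `A`, two distinct clusters being adjacent iff they contain nodes
adjacent in `A`. -/
def HStep (A B : FinSG) : Prop :=
  ∃ Cs : List (Set A.V), ClusterExec A.G.Adj Set.univ Cs ∧
    ∃ e : B.V ≃ {C : Set A.V // C ∈ Cs},
      ∀ b b' : B.V, B.G.Adj b b' ↔
        ((e b).1 ≠ (e b').1 ∧ ∃ x ∈ (e b).1, ∃ y ∈ (e b').1, A.G.Adj x y)

/-- `HRun A k B` : a run of `HCluster` starting at the (hyper)graph `A`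
making `k` calls to `Cluster` and currently at the (hyper)graph `B`; each
call is only made when the stopping condition does not yet hold. -/
inductive HRun : FinSG → ℕ → FinSG → Prop
  | refl (A : FinSG) : HRun A 0 A
  | step {A B C : FinSG} {k : ℕ} :
      ¬ Stopped A → HStep A B → HRun B k C → HRun A (k + 1) C

end P2P

/-!
One call of `Cluster` on a connected graph with `n ≥ 3` nodes yields at most `n - 2` clusters.
The first cluster is grown from a node `a` of minimal normalised degree. If it has three or more
nodes there is nothing to show. If it is `{a}`, then `a` has a neighbour it did not absorb, so
its normalised degree, and by minimality every degree, is at least 3; removing `a` leaves every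
degree at least 2, and the same bound applies to the remaining clusters. If it is a pair
`{a, b}`, it contains every neighbour of `a`, and a node outside adjacent to `b` keeps `b` from
propagating; either way there is an edge outside the pair, and on a node set with an edge
`Cluster` yields fewer clusters than nodes.

Clustering preserves connectedness, and a connected graph with at most two nodes is acyclic, so
every call made before `HCluster` stops removes at least two nodes.
-/

namespace P2P

section Clustering

variable {V : Type*} {Adj : V → V → Prop}

def Expands (Adj : V → V → Prop) (N : Set V) (n : V) : Prop :=
  NDeg Adj N n ≤ 2 ∨ Deg Adj N n = 1

def HasEdge (Adj : V → V → Prop) (U : Set V) : Prop :=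
  ∃ a ∈ U, ∃ b ∈ U, a ≠ b ∧ Adj a b

lemma two_lt_ndeg_of_not_expands {N : Set V} {n : V} (h : ¬ Expands Adj N n) :
    2 < NDeg Adj N n := by
  simp only [Expands, not_or, not_le] at h
  exact h.1

section Degree

variable {U : Set V} {n : V}

lemma deg_lt_ncard (hU : U.Finite) (hn : n ∈ U) : Deg Adj U n < U.ncard := by
  refine Set.ncard_lt_ncard (Set.ssubset_iff_subset_ne.2 ⟨Set.sep_subset _ _, fun h => ?_⟩) hU
  exact (h.symm ▸ hn : n ∈ {m ∈ U | m ≠ n ∧ Adj m n}).2.1 rfl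

lemma ndeg_le_deg (hU : U.Finite) (n : V) : NDeg Adj U n ≤ Deg Adj U n :=
  Set.ncard_le_ncard (fun _ hm => ⟨hm.1, hm.2.1, hm.2.2.1⟩) (hU.subset (Set.sep_subset _ _))

lemma deg_le_deg_sdiff_singleton_add_one (hU : U.Finite) (x n : V) :
    Deg Adj U n ≤ Deg Adj (U \ {x}) n + 1 := by
  have hsub :
      {m ∈ U | m ≠ n ∧ Adj m n} ⊆ insert x {m ∈ U \ {x} | m ≠ n ∧ Adj m n} := by
    intro m hm
    rcases eq_or_ne m x with rfl | hmx
    · exact Set.mem_insert _ _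
    · exact Set.mem_insert_of_mem _ ⟨⟨hm.1, hmx⟩, hm.2⟩
  exact (Set.ncard_le_ncard hsub ((hU.sdiff.subset (Set.sep_subset _ _)).insert x)).trans
    (Set.ncard_insert_le _ _)

lemma exists_adj_of_deg_pos (h : 0 < Deg Adj U n) : ∃ w ∈ U, w ≠ n ∧ Adj w n :=
  Set.nonempty_of_ncard_ne_zero h.ne'

lemma exists_adj_ne_of_one_lt_deg (h : 1 < Deg Adj U n) (x : V) :
    ∃ w ∈ U, w ≠ n ∧ w ≠ x ∧ Adj w n := by
  obtain ⟨w, hw, hwx⟩ := Set.exists_ne_of_one_lt_ncard h x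
  exact ⟨w, hw.1, hw.2.1, hwx, hw.2.2⟩

lemma exists_adj_ne_of_one_lt_ndeg (h : 1 < NDeg Adj U n) (x : V) :
    ∃ w ∈ U, w ≠ n ∧ w ≠ x ∧ Adj w n ∧ 1 < Deg Adj U w := by
  obtain ⟨w, hw, hwx⟩ := Set.exists_ne_of_one_lt_ncard h x
  exact ⟨w, hw.1, hw.2.1, hwx, hw.2.2⟩

lemma hasEdge_sdiff_singleton_of_one_lt_ndeg (h : 1 < NDeg Adj U n) :
    HasEdge Adj (U \ {n}) := by
  obtain ⟨w, hw, hwn, -, -, hwdeg⟩ := exists_adj_ne_of_one_lt_ndeg h n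
  obtain ⟨u, hu, huw, hun, huadj⟩ := exists_adj_ne_of_one_lt_deg hwdeg n
  exact ⟨u, ⟨hu, hun⟩, w, ⟨hw, hwn⟩, huw, huadj⟩

end Degree

section Propagation

variable {U C C' : Set V}

lemma extSet_subset : extSet Adj U C ⊆ U := fun _ h => h.1

lemma Propagates.subset (h : Propagates Adj U C C') : C ⊆ C' := by
  induction h with
  | done => exact subset_rfl
  | step _ _ _ _ _ ih => exact Set.subset_union_left.trans ih

lemma sdiff_extSet_union_union_extSet :
    (U \ extSet Adj U C) ∪ (C ∪ extSet Adj U C) = U ∪ C := by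
  rw [← Set.union_assoc, Set.union_right_comm, Set.sdiff_union_self,
    Set.union_eq_left.2 extSet_subset]

lemma Propagates.subset_union (h : Propagates Adj U C C') : C' ⊆ U ∪ C := by
  induction h with
  | done => exact Set.subset_union_right
  | step _ _ _ _ _ ih => exact ih.trans sdiff_extSet_union_union_extSet.subset

lemma Propagates.extSet_eq_empty (h : Propagates Adj U C C') (hUC : Disjoint U C) :
    extSet Adj ((U ∪ C) \ C') C' = ∅ := by
  induction h with
  | done U C he => rwa [Set.union_sdiff_right, hUC.sdiff_eq_left]
  | step U C C' _ _ ih =>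
    rw [← sdiff_extSet_union_union_extSet]
    exact ih (Set.disjoint_union_right.2
      ⟨hUC.mono_left Set.sdiff_subset, Set.disjoint_sdiff_left⟩)

lemma Propagates.exists_expands_of_ne (h : Propagates Adj U C C') (hne : C' ≠ C) :
    ∃ c ∈ C, Expands Adj (U ∪ C) c := by
  cases h with
  | done => exact absurd rfl hne
  | step _ _ _ he _ =>
    obtain ⟨-, -, c, hc, -, hexp⟩ := Set.nonempty_iff_ne_empty.2 he
    exact ⟨c, hc, hexp⟩

end Propagation

section Cluster

variable {U C : Set V} {n : V}

lemma mem_cluster (h : Propagates Adj (U \ {n}) {n} C) : n ∈ C :=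
  h.subset rfl

lemma cluster_subset (hn : n ∈ U) (h : Propagates Adj (U \ {n}) {n} C) : C ⊆ U :=
  h.subset_union.trans (Set.sdiff_union_of_subset (Set.singleton_subset_iff.2 hn)).subset

lemma not_expands_of_adj (hn : n ∈ U) (h : Propagates Adj (U \ {n}) {n} C)
    {u c : V} (hu : u ∈ U) (huC : u ∉ C) (hc : c ∈ C) (ha : Adj u c) :
    ¬ Expands Adj U c := by
  intro hexp
  have hUC : (U \ C) ∪ C = U := Set.sdiff_union_of_subset (cluster_subset hn h)
  have hfinal := h.extSet_eq_empty Set.disjoint_sdiff_left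
  rw [Set.sdiff_union_of_subset (Set.singleton_subset_iff.2 hn)] at hfinal
  have hu' : u ∈ extSet Adj (U \ C) C := ⟨⟨hu, huC⟩, c, hc, ha, by rwa [hUC]⟩
  rw [hfinal] at hu'
  exact hu'

lemma mem_cluster_of_adj (hn : n ∈ U) (h : Propagates Adj (U \ {n}) {n} C) (hC : C ≠ {n})
    {u : V} (hu : u ∈ U) (ha : Adj u n) : u ∈ C := by
  by_contra huC
  obtain ⟨c, rfl, hexp⟩ := h.exists_expands_of_ne hC
  rw [Set.sdiff_union_of_subset (Set.singleton_subset_iff.2 hn)] at hexp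
  exact not_expands_of_adj hn h hu huC (mem_cluster h) ha hexp

lemma eq_singleton_or_eq_pair_or_three_le_ncard (hC : C.Finite) (hn : n ∈ C) :
    C = {n} ∨ (∃ m, m ≠ n ∧ C = {n, m}) ∨ 3 ≤ C.ncard := by
  by_cases h1 : C = {n}
  · exact Or.inl h1
  obtain ⟨m, hm, hmn⟩ : ∃ m ∈ C, m ≠ n := by
    by_contra! h
    exact h1 (Set.eq_singleton_iff_unique_mem.2 ⟨hn, h⟩)
  by_cases h2 : C = {n, m}
  · exact Or.inr (Or.inl ⟨m, hmn, h2⟩)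
  obtain ⟨k, hk, hknm⟩ : ∃ k ∈ C, k ∉ ({n, m} : Set V) := by
    by_contra! h
    exact h2 (subset_antisymm h (Set.insert_subset_iff.2 ⟨hn, Set.singleton_subset_iff.2 hm⟩))
  simp only [Set.mem_insert_iff, Set.mem_singleton_iff, not_or] at hknm
  exact Or.inr (Or.inr ((Set.two_lt_ncard_iff hC).2
    ⟨n, m, k, hn, hm, hk, hmn.symm, Ne.symm hknm.1, Ne.symm hknm.2⟩))

lemma hasEdge_sdiff_of_cluster_eq_singleton (hsym : Std.Symm Adj) (hn : n ∈ U)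
    (h : Propagates Adj (U \ {n}) {n} {n}) (hedge : HasEdge Adj U) :
    HasEdge Adj (U \ {n}) := by
  obtain ⟨a, ha, b, hb, hab, hadj⟩ := hedge
  have hlonely : ∀ w ∈ U, w ≠ n → Adj w n → HasEdge Adj (U \ {n}) := fun w hw hwn hwadj =>
    hasEdge_sdiff_singleton_of_one_lt_ndeg
      (one_lt_two.trans (two_lt_ndeg_of_not_expands (not_expands_of_adj hn h hw hwn rfl hwadj)))
  by_cases hbn : b = n
  · exact hlonely a ha (hbn ▸ hab) (hbn ▸ hadj)
  by_cases han : a = n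
  · exact hlonely b hb hbn (han ▸ hsym.symm _ _ hadj)
  exact ⟨a, ⟨ha, han⟩, b, ⟨hb, hbn⟩, hab, hadj⟩

lemma hasEdge_sdiff_of_cluster_eq_pair (hsym : Std.Symm Adj) (hn : n ∈ U) {m v : V}
    (hmn : m ≠ n) (h : Propagates Adj (U \ {n}) {n} {n, m}) (hv : v ∈ U \ {n, m})
    (hvdeg : 0 < Deg Adj U v) : HasEdge Adj (U \ {n, m}) := by
  have hnbr : ∀ u ∈ U, Adj u n → u ∈ ({n, m} : Set V) := fun u hu ha =>
    mem_cluster_of_adj hn h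
      (fun he => hmn (he ▸ Set.mem_insert_of_mem _ rfl : m ∈ ({n} : Set V))) hu ha
  obtain ⟨w, hw, hwv, hwadj⟩ := exists_adj_of_deg_pos hvdeg
  by_cases hwC : w ∉ ({n, m} : Set V)
  · exact ⟨w, ⟨hw, hwC⟩, v, hv, hwv, hwadj⟩
  -- `w` is not `n`, whose neighbours were all absorbed, so `w = m`, which then did not propagate
  have hwm : w = m := by
    rcases not_not.1 hwC with rfl | rfl
    · exact absurd (hnbr v hv.1 (hsym.symm _ _ hwadj)) hv.2
    · rfl
  subst hwm
  have hwdeg := two_lt_ndeg_of_not_expands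
    (not_expands_of_adj hn h hv.1 hv.2 (Set.mem_insert_of_mem _ rfl) (hsym.symm _ _ hwadj))
  obtain ⟨x, hx, hxw, hxn, -, hxdeg⟩ :=
    exists_adj_ne_of_one_lt_ndeg (one_lt_two.trans hwdeg) n
  have hxC : x ∉ ({n, w} : Set V) := by simp [hxn, hxw]
  obtain ⟨u, hu, hux, huw, huadj⟩ := exists_adj_ne_of_one_lt_deg hxdeg w
  have hun : u ≠ n := fun hun => hxC (hnbr x hx (hsym.symm _ _ (hun ▸ huadj)))
  exact ⟨u, ⟨hu, by simp [hun, huw]⟩, x, ⟨hx, hxC⟩, hux, huadj⟩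

end Cluster

section ClusterExec

variable {U : Set V} {Cs : List (Set V)}

lemma ClusterExec.subset_of_mem (h : ClusterExec Adj U Cs) : ∀ C ∈ Cs, C ⊆ U := by
  induction h with
  | nil => simp
  | cons hn _ hprop _ ih =>
    intro D hD
    rcases List.mem_cons.1 hD with rfl | hD
    · exact cluster_subset hn hprop
    · exact (ih D hD).trans Set.sdiff_subset

lemma ClusterExec.nonempty_of_mem (h : ClusterExec Adj U Cs) : ∀ C ∈ Cs, C.Nonempty := by
  induction h with
  | nil => simp
  | cons _ _ hprop _ ih =>
    intro D hD
    rcases List.mem_cons.1 hD with rfl | hD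
    · exact ⟨_, mem_cluster hprop⟩
    · exact ih D hD

lemma ClusterExec.exists_mem_of_mem (h : ClusterExec Adj U Cs) :
    ∀ x ∈ U, ∃ C ∈ Cs, x ∈ C := by
  induction h with
  | nil => simp
  | @cons U n C rest _ _ _ _ ih =>
    intro x hx
    by_cases hxC : x ∈ C
    · exact ⟨C, List.mem_cons_self, hxC⟩
    · obtain ⟨D, hD, hxD⟩ := ih x ⟨hx, hxC⟩
      exact ⟨D, List.mem_cons_of_mem _ hD, hxD⟩

lemma ClusterExec.eq_of_mem_of_mem (h : ClusterExec Adj U Cs) :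
    ∀ C₁ ∈ Cs, ∀ C₂ ∈ Cs, ∀ x ∈ C₁, x ∈ C₂ → C₁ = C₂ := by
  induction h with
  | nil => simp
  | cons _ _ _ hrest ih =>
    intro C₁ hC₁ C₂ hC₂ x hx₁ hx₂
    rcases List.mem_cons.1 hC₁ with rfl | h₁ <;> rcases List.mem_cons.1 hC₂ with rfl | h₂
    · rfl
    · exact ((hrest.subset_of_mem C₂ h₂ hx₂).2 hx₁).elim
    · exact ((hrest.subset_of_mem C₁ h₁ hx₁).2 hx₂).elim
    · exact ih C₁ h₁ C₂ h₂ x hx₁ hx₂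

lemma ClusterExec.length_le_ncard (h : ClusterExec Adj U Cs) (hU : U.Finite) :
    Cs.length ≤ U.ncard := by
  induction h with
  | nil => simp
  | cons hn _ hprop _ ih =>
    have hsplit := Set.ncard_sdiff_add_ncard_of_subset (cluster_subset hn hprop) hU
    have hC := (Set.ncard_pos (hU.subset (cluster_subset hn hprop))).2 ⟨_, mem_cluster hprop⟩
    have := ih hU.sdiff
    simp only [List.length_cons]
    omega

lemma ClusterExec.length_add_one_le_ncard (h : ClusterExec Adj U Cs) (hsym : Std.Symm Adj)
    (hU : U.Finite) (hedge : HasEdge Adj U) : Cs.length + 1 ≤ U.ncard := by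
  induction h with
  | nil => obtain ⟨a, ha, -⟩ := hedge; exact absurd ha (Set.notMem_empty a)
  | @cons U n C rest hn _ hprop hrest ih =>
    have hCU := cluster_subset hn hprop
    have hsplit := Set.ncard_sdiff_add_ncard_of_subset hCU hU
    simp only [List.length_cons]
    rcases eq_singleton_or_eq_pair_or_three_le_ncard (hU.subset hCU) (mem_cluster hprop) with
      rfl | ⟨m, hmn, rfl⟩ | hC3
    · have := ih hU.sdiff (hasEdge_sdiff_of_cluster_eq_singleton hsym hn hprop hedge)
      rw [Set.ncard_singleton] at hsplit
      omega
    · have := hrest.length_le_ncard hU.sdiff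
      rw [Set.ncard_pair hmn.symm] at hsplit
      omega
    · have := hrest.length_le_ncard hU.sdiff
      omega

lemma ClusterExec.length_add_two_le_ncard (h : ClusterExec Adj U Cs) (hsym : Std.Symm Adj)
    (hU : U.Finite) (h3 : 3 ≤ U.ncard) (hdeg : ∀ v ∈ U, 0 < Deg Adj U v) :
    Cs.length + 2 ≤ U.ncard := by
  induction h with
  | nil => simp at h3
  | @cons U n C rest hn hmin hprop hrest ih =>
    have hCU := cluster_subset hn hprop
    have hsplit := Set.ncard_sdiff_add_ncard_of_subset hCU hU
    simp only [List.length_cons]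
    rcases eq_singleton_or_eq_pair_or_three_le_ncard (hU.subset hCU) (mem_cluster hprop) with
      rfl | ⟨m, hmn, rfl⟩ | hC3
    · obtain ⟨w, hw, hwn, hwadj⟩ := exists_adj_of_deg_pos (hdeg n hn)
      have hn3 := two_lt_ndeg_of_not_expands (not_expands_of_adj hn hprop hw hwn rfl hwadj)
      have hdeg3 : ∀ v ∈ U, 2 < Deg Adj U v := fun v hv =>
        (hn3.trans_le (hmin v hv)).trans_le (ndeg_le_deg hU v)
      have hdeg' : ∀ v ∈ U \ {n}, 0 < Deg Adj (U \ {n}) v := fun v hv => by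
        have := deg_le_deg_sdiff_singleton_add_one (Adj := Adj) hU n v
        have := hdeg3 v hv.1
        omega
      have := hdeg3 n hn
      have := deg_lt_ncard (Adj := Adj) hU hn
      rw [Set.ncard_singleton] at hsplit
      have := ih hU.sdiff (by omega) hdeg'
      omega
    · rw [Set.ncard_pair hmn.symm] at hsplit
      obtain ⟨v, hv⟩ : (U \ {n, m}).Nonempty := (Set.ncard_pos hU.sdiff).1 (by omega)
      have := hrest.length_add_one_le_ncard hsym hU.sdiff
        (hasEdge_sdiff_of_cluster_eq_pair hsym hn hmn hprop hv (hdeg v hv.1))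
      omega
    · have := hrest.length_le_ncard hU.sdiff
      omega

end ClusterExec

lemma exists_propagates {U : Set V} (hU : U.Finite) (C : Set V) :
    ∃ C', Propagates Adj U C C' := by
  by_cases he : extSet Adj U C = ∅
  · exact ⟨C, .done U C he⟩
  have hsplit := Set.ncard_sdiff_add_ncard_of_subset (extSet_subset : extSet Adj U C ⊆ U) hU
  have := (Set.ncard_pos (hU.subset extSet_subset)).2 (Set.nonempty_iff_ne_empty.2 he)
  obtain ⟨C', h⟩ : ∃ C', Propagates Adj (U \ extSet Adj U C) (C ∪ extSet Adj U C) C' :=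
    exists_propagates hU.sdiff _
  exact ⟨C', .step U C C' he h⟩
termination_by U.ncard

lemma exists_clusterExec {U : Set V} (hU : U.Finite) : ∃ Cs, ClusterExec Adj U Cs := by
  rcases U.eq_empty_or_nonempty with rfl | hne
  · exact ⟨[], .nil⟩
  obtain ⟨n, hn, hmin⟩ := Set.exists_min_image U (NDeg Adj U) hU hne
  obtain ⟨C, hprop⟩ := exists_propagates (Adj := Adj) hU.sdiff {n}
  have hsplit := Set.ncard_sdiff_add_ncard_of_subset (cluster_subset hn hprop) hU
  have := (Set.ncard_pos (hU.subset (cluster_subset hn hprop))).2 ⟨_, mem_cluster hprop⟩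
  obtain ⟨Cs, h⟩ : ∃ Cs, ClusterExec Adj (U \ C) Cs := exists_clusterExec hU.sdiff
  exact ⟨C :: Cs, .cons hn hmin hprop h⟩
termination_by U.ncard

end Clustering

section HCluster

lemma connected_of_surjective_of_adj {V W : Type*} {G : SimpleGraph V} {H : SimpleGraph W}
    (f : V → W) (hf : Function.Surjective f)
    (hadj : ∀ x y, G.Adj x y → f x ≠ f y → H.Adj (f x) (f y)) (hG : G.Connected) :
    H.Connected := by
  have := hG.nonempty.map f
  refine ⟨hf.forall₂.2 fun x y => ?_⟩
  induction (G.reachable_iff_reflTransGen x y).1 (hG x y) with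
  | refl => rfl
  | @tail b c _ hbc ih =>
    by_cases hne : f b = f c
    · rwa [← hne]
    · exact ih.trans (hadj b c hbc hne).reachable

lemma deg_univ_pos {V : Type*} [Finite V] [Nontrivial V] {G : SimpleGraph V}
    (hG : G.Preconnected) (v : V) : 0 < Deg G.Adj Set.univ v := by
  obtain ⟨w, hw⟩ := hG.exists_adj_of_nontrivial v
  exact (Set.ncard_pos).2 ⟨w, trivial, hw.ne.symm, hw.symm⟩

lemma stopped_of_card_le_two {A : FinSG.{u}} (hA : A.G.Connected)
    (h2 : Fintype.card A.V ≤ 2) : Stopped A := by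
  classical
  have hlow := hA.card_vert_le_card_edgeSet_add_one
  have hup := A.G.card_edgeFinset_le_card_choose_two
  rw [Nat.card_eq_fintype_card, Nat.card_coe_set_eq] at hlow
  rw [← Set.ncard_coe_finset, SimpleGraph.coe_edgeFinset] at hup
  have hchoose : (Fintype.card A.V).choose 2 ≤ Fintype.card A.V - 1 := by
    interval_cases Fintype.card A.V <;> rfl
  unfold Stopped
  omega

lemma three_le_card_of_not_stopped {A : FinSG.{u}} (hA : A.G.Connected) (hs : ¬ Stopped A) :
    3 ≤ Fintype.card A.V := by
  by_contra h
  exact hs (stopped_of_card_le_two hA (by omega))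

lemma HStep.card_add_two_le {A B : FinSG.{u}} (h : HStep A B) (hA : A.G.Connected)
    (h3 : 3 ≤ Fintype.card A.V) : Fintype.card B.V + 2 ≤ Fintype.card A.V := by
  classical
  obtain ⟨Cs, hCs, e, -⟩ := h
  have : Nontrivial A.V := Fintype.one_lt_card_iff_nontrivial.1 (by omega)
  have hlen := hCs.length_add_two_le_ncard A.G.symm Set.finite_univ
    (by rwa [Set.ncard_univ, Nat.card_eq_fintype_card])
    fun v _ => deg_univ_pos hA.preconnected v
  calc Fintype.card B.V + 2
      = Cs.toFinset.card + 2 := by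
        rw [← Nat.card_eq_fintype_card, Nat.card_congr e, ← Nat.card_eq_finsetCard,
          Nat.card_congr (Equiv.subtypeEquivRight fun _ => List.mem_toFinset)]
    _ ≤ Cs.length + 2 := by grw [List.toFinset_card_le]
    _ ≤ Fintype.card A.V := by rwa [Set.ncard_univ, Nat.card_eq_fintype_card] at hlen

lemma HStep.connected {A B : FinSG.{u}} (h : HStep A B) (hA : A.G.Connected) :
    B.G.Connected := by
  obtain ⟨Cs, hCs, e, he⟩ := h
  choose f hfCs hf using fun x : A.V => hCs.exists_mem_of_mem x trivial
  let g : A.V → B.V := fun x => e.symm ⟨f x, hfCs x⟩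
  have hmem : ∀ x, x ∈ (e (g x)).1 := fun x => by simpa [g] using hf x
  refine connected_of_surjective_of_adj g (fun b => ?_) (fun x y hxy hne => ?_) hA
  · obtain ⟨x, hx⟩ := hCs.nonempty_of_mem _ (e b).2
    exact ⟨x, e.injective (Subtype.ext
      (hCs.eq_of_mem_of_mem _ (e (g x)).2 _ (e b).2 x (hmem x) hx))⟩
  · exact (he _ _).2
      ⟨fun h => hne (e.injective (Subtype.ext h)), x, hmem x, y, hmem y, hxy⟩

def clusterGraph {V : Type*} (G : SimpleGraph V) (Cs : List (Set V)) :
    SimpleGraph {C : Set V // C ∈ Cs} where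
  Adj b b' := b.1 ≠ b'.1 ∧ ∃ x ∈ b.1, ∃ y ∈ b'.1, G.Adj x y
  symm := ⟨fun _ _ ⟨hne, x, hx, y, hy, hxy⟩ => ⟨hne.symm, y, hy, x, hx, hxy.symm⟩⟩
  loopless := ⟨fun _ ⟨hne, _⟩ => hne rfl⟩

lemma exists_hStep (A : FinSG.{u}) : ∃ B : FinSG.{u}, HStep A B := by
  classical
  obtain ⟨Cs, hCs⟩ := exists_clusterExec (Adj := A.G.Adj) (Set.finite_univ (α := A.V))
  exact ⟨⟨_, inferInstance, clusterGraph A.G Cs⟩, Cs, hCs, Equiv.refl _, fun _ _ => Iff.rfl⟩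

lemma HRun.le_card_add_one_div_two {A B : FinSG.{u}} {k : ℕ} (h : HRun A k B)
    (hA : A.G.Connected) :
    k ≤ (Fintype.card A.V + 1) / 2 := by
  induction h with
  | refl => exact Nat.zero_le _
  | @step A B C k hns hstep _ ih =>
    have := hstep.card_add_two_le hA (three_le_card_of_not_stopped hA hns)
    have := ih (hstep.connected hA)
    omega

lemma exists_hRun_stopped (A : FinSG.{u}) (hA : A.G.Connected) :
    ∃ k B, HRun A k B ∧ Stopped B := by
  by_cases hs : Stopped A
  · exact ⟨0, A, .refl A, hs⟩
  obtain ⟨B, hstep⟩ := exists_hStep A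
  have := hstep.card_add_two_le hA (three_le_card_of_not_stopped hA hs)
  obtain ⟨k, C, hrun, hC⟩ := exists_hRun_stopped B (hstep.connected hA)
  exact ⟨k + 1, C, .step hs hstep hrun, hC⟩
termination_by Fintype.card A.V

end HCluster

end P2P

open P2P in
/-- Let `G` be a finite connected graph with `n` nodes.
Then the hyper-clustering procedure `HCluster` terminates, and the number of
calls it makes to `Cluster` is at most `⌈n / 2⌉`: every run of `HCluster`
from `G` makes at most `⌈n / 2⌉` calls to `Cluster`, and some run reaches a
stopped (acyclic) hypergraph within that many calls. -/
theorem hcluster_terminates {V : Type u} [Fintype V]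
    (G : SimpleGraph V) (hconn : G.Connected) :
    (∀ (k : ℕ) (B : FinSG.{u}), HRun ⟨V, ‹Fintype V›, G⟩ k B →
        k ≤ (Fintype.card V + 1) / 2) ∧
    (∃ (k : ℕ) (B : FinSG.{u}), HRun ⟨V, ‹Fintype V›, G⟩ k B ∧ Stopped B ∧
        k ≤ (Fintype.card V + 1) / 2) := by
  refine ⟨fun k B h => h.le_card_add_one_div_two hconn, ?_⟩
  obtain ⟨k, B, h, hB⟩ := exists_hRun_stopped ⟨V, ‹Fintype V›, G⟩ hconn
  exact ⟨k, B, h, hB, h.le_card_add_one_div_two hconn⟩
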